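/- arXiv:2409.12834 — 4 statements merged into one kernel-verified Lean document; each statement's English description precedes it below -/
import Mathlib

section
/- Let k be the algebraic closure of a purely transcendental extension k_0(λ) of an algebraically closed field k_0, let N = n + r + s with n, r, s ≥ 0, let d ≥ 4 and l ≥ 1 with 2l ≤ d, and let f, a_0, …, a_l ∈ k_0[x_0,…,x_n, y_1,…,ŷ_j,…,y_{r+1}, z_1,…,z_s] be homogeneous of degrees deg f = d and deg a_i = d − 2i, not containing the variable y_j for some 1 ≤ j ≤ r+1. Let R = k[t]_{(t)} and let 𝒳 ⊂ P^{N+3}_R be the complete intersection R-scheme defined by f + Σ_{i=0}^{l} a_i x_0^i y_j^i + x_0^{d−1} z + x_0^{d−2}(λ y_j + x_0) w = 0 and t x_0^2 + zw = 0 (in homogeneous coordinates x_0,…,x_n, y_1,…,y_{r+1}, z_1,…,z_s, z, w). Then the singular locus of 𝒳 is contained in the closed subset {x_0 = 0} ⊂ 𝒳. -/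
open MvPolynomial

universe u

/-- The homogeneous coordinates of `ℙ^{N+1}` (with `N = n+r+s`): `x_0,…,x_n`, `y_1,…,y_{r+1}`,
`z_1,…,z_s`. -/
abbrev VarsZ (n r s : ℕ) : Type := Fin (n + 1) ⊕ (Fin (r + 1) ⊕ Fin s)

/-- The homogeneous coordinates of `ℙ^{N+3}`: those of `ℙ^{N+1}` together with `z` and `w`. -/
abbrev Vars3 (n r s : ℕ) : Type := VarsZ n r s ⊕ Fin 2

/-- A polynomial does not contain the variable `v`. -/
def NoVar {σ R : Type*} [CommSemiring R] (p : MvPolynomial σ R) (v : σ) : Prop :=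
  ∀ m ∈ p.support, m v = 0


private lemma pderiv_rename_zero {σ τ R : Type*} [CommSemiring R] [DecidableEq τ]
    (g : σ → τ) (p : MvPolynomial σ R) (i : τ) (h : ∀ x, g x ≠ i) :
    pderiv i (rename g p) = 0 := by
  apply pderiv_eq_zero_of_notMem_vars
  intro hmem
  obtain ⟨w, -, hw⟩ := Finset.mem_image.mp (vars_rename _ _ hmem)
  exact h w hw

private lemma pderiv_X_pow_zero {σ R : Type*} [CommRing R] [DecidableEq σ]
    {i j : σ} (h : j ≠ i) (m : ℕ) :
    pderiv i ((X j : MvPolynomial σ R) ^ m) = 0 := by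
  simp [pderiv_pow, pderiv_X_of_ne h]

/-- **Lemma 5.1 (Lange–Schreieder)**.  Let `k` be the algebraic closure of a purely transcendental
extension `k₀(λ)` of an algebraically closed field `k₀`, let `N = n+r+s`, `d ≥ 4`, `l ≥ 1` with
`2l ≤ d`, and let `f, a_0, …, a_l ∈ k₀[x,y,z]` be homogeneous of degrees `d` and `d−2i`, not
containing the variable `y_j`.  Let `R = k[t]_{(t)}` and let `𝒳 ⊆ ℙ^{N+3}_R` be the complete
intersection defined by `f + Σ a_i x_0^i y_j^i + x_0^{d−1} z + x_0^{d−2}(λ y_j + x_0) w = 0` and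
`t x_0^2 + z w = 0`.  Then the singular locus of `𝒳` (cut out by the vanishing of all `2×2`
minors of the Jacobian of the two defining equations, in all variables including `t`) is
contained in `{x_0 = 0}`.  (Singular points are tested on field-valued points.) -/
theorem singular_locus_of_double_cone_total_space
    (k₀ : Type u) [Field k₀] [IsAlgClosed k₀]
    (k : Type u) [Field k] [IsAlgClosed k] [Algebra k₀ k]
    (lam : k) (hlam : Transcendental k₀ lam)
    (halg : ∀ x : k, IsAlgebraic (IntermediateField.adjoin k₀ ({lam} : Set k)) x)
    (n r s : ℕ) (d l : ℕ) (hd : 4 ≤ d) (hl : 1 ≤ l) (hld : 2 * l ≤ d)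
    (j : Fin (r + 1))
    (f : MvPolynomial (VarsZ n r s) k₀) (a : ℕ → MvPolynomial (VarsZ n r s) k₀)
    (hf : f.IsHomogeneous d) (ha : ∀ i ≤ l, (a i).IsHomogeneous (d - 2 * i))
    (hfy : NoVar f (Sum.inr (Sum.inl j))) (hay : ∀ i ≤ l, NoVar (a i) (Sum.inr (Sum.inl j)))
    (hirr : Irreducible (MvPolynomial.map (algebraMap k₀ k) (f + a 0)))
    -- the two defining equations of `𝒳`, with `t` treated as an extra variable
    (F₁ F₂ : MvPolynomial (Vars3 n r s ⊕ Unit) k)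
    (hF₁ : F₁ =
      rename (Sum.inl ∘ Sum.inl)
        (MvPolynomial.map (algebraMap k₀ k) (f + ∑ i ∈ Finset.range (l + 1),
          a i * X (Sum.inl 0 : VarsZ n r s) ^ i * X (Sum.inr (Sum.inl j)) ^ i))
      + X (Sum.inl (Sum.inl (Sum.inl 0))) ^ (d - 1) * X (Sum.inl (Sum.inr 0))
      + X (Sum.inl (Sum.inl (Sum.inl 0))) ^ (d - 2)
          * (C lam * X (Sum.inl (Sum.inl (Sum.inr (Sum.inl j)))) + X (Sum.inl (Sum.inl (Sum.inl 0))))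
          * X (Sum.inl (Sum.inr 1)))
    (hF₂ : F₂ = X (Sum.inr () : Vars3 n r s ⊕ Unit) * X (Sum.inl (Sum.inl (Sum.inl 0))) ^ 2
      + X (Sum.inl (Sum.inr 0)) * X (Sum.inl (Sum.inr 1))) :
    -- any field-valued point of `𝒳` at which all 2×2 minors of the Jacobian vanish
    -- satisfies `x_0 = 0`
    ∀ (L : Type u) [Field L] [Algebra k L] (v : Vars3 n r s ⊕ Unit → L),
      aeval v F₁ = 0 → aeval v F₂ = 0 →
      (∀ p q : Vars3 n r s ⊕ Unit,
        aeval v (pderiv p F₁) * aeval v (pderiv q F₂)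
          = aeval v (pderiv q F₁) * aeval v (pderiv p F₂)) →
      v (Sum.inl (Sum.inl (Sum.inl 0))) = 0 := by
  intro L _ _ v hv1 hv2 hmin
  by_contra hx
  have hne0 : ∀ x : VarsZ n r s,
      (Sum.inl ∘ Sum.inl : VarsZ n r s → Vars3 n r s ⊕ Unit) x ≠ Sum.inr () := by
    intro x; simp [Function.comp]
  have hnez : ∀ x : VarsZ n r s,
      (Sum.inl ∘ Sum.inl : VarsZ n r s → Vars3 n r s ⊕ Unit) x ≠ Sum.inl (Sum.inr 0) := by
    intro x; simp [Function.comp]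
  have ht1 : pderiv (Sum.inr () : Vars3 n r s ⊕ Unit) F₁ = 0 := by
    rw [hF₁]
    simp only [map_add, pderiv_rename_zero _ _ _ hne0, pderiv_mul, pderiv_C,
      pderiv_X_pow_zero (show (Sum.inl (Sum.inl (Sum.inl 0)) : Vars3 n r s ⊕ Unit) ≠ Sum.inr () by simp),
      pderiv_X_of_ne (show (Sum.inl (Sum.inl (Sum.inl 0)) : Vars3 n r s ⊕ Unit) ≠ Sum.inr () by simp),
      pderiv_X_of_ne (show (Sum.inl (Sum.inl (Sum.inr (Sum.inl j))) : Vars3 n r s ⊕ Unit) ≠ Sum.inr () by simp),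
      pderiv_X_of_ne (show (Sum.inl (Sum.inr 0) : Vars3 n r s ⊕ Unit) ≠ Sum.inr () by simp),
      pderiv_X_of_ne (show (Sum.inl (Sum.inr 1) : Vars3 n r s ⊕ Unit) ≠ Sum.inr () by simp)]
    ring
  have ht2 : aeval v (pderiv (Sum.inr () : Vars3 n r s ⊕ Unit) F₂)
      = v (Sum.inl (Sum.inl (Sum.inl 0))) ^ 2 := by
    rw [hF₂]
    simp only [map_add, pderiv_mul, pderiv_X_self,
      pderiv_X_pow_zero (show (Sum.inl (Sum.inl (Sum.inl 0)) : Vars3 n r s ⊕ Unit) ≠ Sum.inr () by simp),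
      pderiv_X_of_ne (show (Sum.inl (Sum.inr 0) : Vars3 n r s ⊕ Unit) ≠ Sum.inr () by simp),
      pderiv_X_of_ne (show (Sum.inl (Sum.inr 1) : Vars3 n r s ⊕ Unit) ≠ Sum.inr () by simp)]
    simp
  have hz1 : aeval v (pderiv (Sum.inl (Sum.inr 0) : Vars3 n r s ⊕ Unit) F₁)
      = v (Sum.inl (Sum.inl (Sum.inl 0))) ^ (d - 1) := by
    rw [hF₁]
    simp only [map_add, pderiv_rename_zero _ _ _ hnez, pderiv_mul, pderiv_C, pderiv_X_self,
      pderiv_X_pow_zero (show (Sum.inl (Sum.inl (Sum.inl 0)) : Vars3 n r s ⊕ Unit) ≠ Sum.inl (Sum.inr 0) by simp),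
      pderiv_X_of_ne (show (Sum.inl (Sum.inl (Sum.inl 0)) : Vars3 n r s ⊕ Unit) ≠ Sum.inl (Sum.inr 0) by simp),
      pderiv_X_of_ne (show (Sum.inl (Sum.inl (Sum.inr (Sum.inl j))) : Vars3 n r s ⊕ Unit) ≠ Sum.inl (Sum.inr 0) by simp),
      pderiv_X_of_ne (show (Sum.inl (Sum.inr 1) : Vars3 n r s ⊕ Unit) ≠ Sum.inl (Sum.inr 0) by simp)]
    simp
  have key := hmin (Sum.inr ()) (Sum.inl (Sum.inr 0))
  rw [ht1, ht2, hz1] at key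
  simp only [map_zero, zero_mul] at key
  rw [← pow_add] at key
  exact hx (pow_eq_zero_iff (by omega) |>.mp key.symm)
end

section
/- Let Y_0 = {f + Σ_{i=0}^{l} a_i x_0^i y_j^i + x_0^{d−1} z = 0} ⊂ P^{N+2}_k and Y_1 = {f + Σ_{i=0}^{l} a_i x_0^i y_j^i + x_0^{d−2}(λ y_j + x_0) w = 0} ⊂ P^{N+2}_k be the two components of the special fibre of the double cone family, and let Z = Y_0 ∩ Y_1 = {f + Σ_{i=0}^{l} a_i x_0^i y_j^i = 0} ⊂ P^{N+1}_k. Then the singular locus of Y_0 is contained in {x_0 = 0}, the singular locus of Y_1 is contained in {x_0(λ y_j + x_0) = 0}, and Y_1^{sing} ∩ Z ⊂ Z^{sing}. -/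
open MvPolynomial

universe u

/-- The homogeneous coordinates of `ℙ^{N+2}`: those of `ℙ^{N+1}` together with one extra
coordinate (the coordinate `z` for `Y₀`, resp. `w` for `Y₁`). -/
abbrev Vars2 (n r s : ℕ) : Type := VarsZ n r s ⊕ Unit

lemma pderiv_rename_of_ne {σ τ R : Type*} [CommSemiring R]
    {g : σ → τ} {i : τ} (h : ∀ x, g x ≠ i) (p : MvPolynomial σ R) :
    pderiv i (rename g p) = 0 := by
  classical
  exact pderiv_eq_zero_of_notMem_vars fun hm => by
    obtain ⟨x, -, hx⟩ := Finset.mem_image.1 (vars_rename g p hm)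
    exact h x hx

/-- **Lemma 5.6 (Lange–Schreieder)**.  In the double cone setting, let
`Y₀ = {f + Σ a_i x_0^i y_j^i + x_0^{d−1} z = 0} ⊆ ℙ^{N+2}_k` and
`Y₁ = {f + Σ a_i x_0^i y_j^i + x_0^{d−2}(λ y_j + x_0) w = 0} ⊆ ℙ^{N+2}_k` be the two components
of the special fibre of the double cone family, and let
`Z = Y₀ ∩ Y₁ = {f + Σ a_i x_0^i y_j^i = 0} ⊆ ℙ^{N+1}_k`.  Then the singular locus of `Y₀` is
contained in `{x_0 = 0}`, the singular locus of `Y₁` is contained in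
`{x_0 (λ y_j + x_0) = 0}`, and `Y₁^{sing} ∩ Z ⊆ Z^{sing}`.
(Singular loci are cut out by the defining equation together with all its partial derivatives,
tested on field-valued points.) -/
theorem singular_locus_of_special_fibre_components
    (k₀ : Type u) [Field k₀] [IsAlgClosed k₀]
    (k : Type u) [Field k] [IsAlgClosed k] [Algebra k₀ k]
    (lam : k) (hlam : Transcendental k₀ lam)
    (halg : ∀ x : k, IsAlgebraic (IntermediateField.adjoin k₀ ({lam} : Set k)) x)
    (n r s : ℕ) (d l : ℕ) (hd : 4 ≤ d) (hl : 1 ≤ l) (hld : 2 * l ≤ d)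
    (j : Fin (r + 1))
    (f : MvPolynomial (VarsZ n r s) k₀) (a : ℕ → MvPolynomial (VarsZ n r s) k₀)
    (hf : f.IsHomogeneous d) (ha : ∀ i ≤ l, (a i).IsHomogeneous (d - 2 * i))
    (hfy : NoVar f (Sum.inr (Sum.inl j))) (hay : ∀ i ≤ l, NoVar (a i) (Sum.inr (Sum.inl j)))
    (hirr : Irreducible (MvPolynomial.map (algebraMap k₀ k) (f + a 0)))
    -- the defining equations of `Z`, `Y₀` and `Y₁`
    (FZ : MvPolynomial (VarsZ n r s) k) (FY₀ FY₁ : MvPolynomial (Vars2 n r s) k)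
    (hFZ : FZ = MvPolynomial.map (algebraMap k₀ k) (f + ∑ i ∈ Finset.range (l + 1),
      a i * X (Sum.inl 0 : VarsZ n r s) ^ i * X (Sum.inr (Sum.inl j)) ^ i))
    (hFY₀ : FY₀ = rename Sum.inl FZ
      + X (Sum.inl (Sum.inl 0) : Vars2 n r s) ^ (d - 1) * X (Sum.inr ()))
    (hFY₁ : FY₁ = rename Sum.inl FZ
      + X (Sum.inl (Sum.inl 0) : Vars2 n r s) ^ (d - 2)
        * (C lam * X (Sum.inl (Sum.inr (Sum.inl j))) + X (Sum.inl (Sum.inl 0)))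
        * X (Sum.inr ())) :
    -- (1) the singular locus of `Y₀` is contained in `{x₀ = 0}`
    (∀ (L : Type u) [Field L] [Algebra k L] (v : Vars2 n r s → L),
      aeval v FY₀ = 0 → (∀ p : Vars2 n r s, aeval v (pderiv p FY₀) = 0) →
      v (Sum.inl (Sum.inl 0)) = 0) ∧
    -- (2) the singular locus of `Y₁` is contained in `{x₀ (λ y_j + x₀) = 0}`
    (∀ (L : Type u) [Field L] [Algebra k L] (v : Vars2 n r s → L),
      aeval v FY₁ = 0 → (∀ p : Vars2 n r s, aeval v (pderiv p FY₁) = 0) →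
      v (Sum.inl (Sum.inl 0))
        * (algebraMap k L lam * v (Sum.inl (Sum.inr (Sum.inl j))) + v (Sum.inl (Sum.inl 0)))
        = 0) ∧
    -- (3) `Y₁^{sing} ∩ Z ⊆ Z^{sing}`
    (∀ (L : Type u) [Field L] [Algebra k L] (v : Vars2 n r s → L),
      aeval v FY₁ = 0 → (∀ p : Vars2 n r s, aeval v (pderiv p FY₁) = 0) →
      v (Sum.inr ()) = 0 →
      aeval (v ∘ Sum.inl) FZ = 0 ∧
        ∀ q : VarsZ n r s, aeval (v ∘ Sum.inl) (pderiv q FZ) = 0) := by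
  
  have hinl : ∀ x : VarsZ n r s, (Sum.inl x : Vars2 n r s) ≠ Sum.inr () := fun x => Sum.inl_ne_inr
  have hd1 : d - 1 ≠ 0 := by omega
  have hd2 : d - 2 ≠ 0 := by omega
  refine ⟨?_, ?_, ?_⟩
  · intro L _ _ v h0 hder
    have h := hder (Sum.inr ())
    rw [hFY₀, map_add, pderiv_rename_of_ne hinl, pderiv_mul, pderiv_pow,
      pderiv_X_of_ne (hinl _), pderiv_X_self] at h
    simp only [zero_add, mul_zero, zero_mul, mul_one, add_zero, map_pow, map_mul, map_add,
      aeval_X] at h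
    exact pow_eq_zero_iff hd1 |>.1 h
  · intro L _ _ v h0 hder
    have h := hder (Sum.inr ())
    rw [hFY₁] at h
    simp only [map_add, pderiv_rename_of_ne hinl, pderiv_mul, pderiv_pow, pderiv_C_mul,
      pderiv_X_self, pderiv_X_of_ne (hinl _), pderiv_C, zero_add, mul_zero,
      zero_mul, mul_one, add_zero, map_pow, map_mul, map_add, aeval_X, aeval_C, map_zero] at h
    rcases mul_eq_zero.1 h with h | h
    · rw [pow_eq_zero_iff hd2 |>.1 h, zero_mul]
    · rw [h, mul_zero]
  · intro L _ _ v h0 hder hw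
    constructor
    · rw [hFY₁, map_add, map_mul, aeval_X, hw, mul_zero, add_zero, aeval_rename] at h0
      exact h0
    · intro q
      have h := hder (Sum.inl q)
      rw [hFY₁, map_add, pderiv_rename (Sum.inl_injective) q, pderiv_mul,
        pderiv_X_of_ne (Ne.symm (hinl _))] at h
      simp only [map_add, aeval_rename, map_mul, aeval_X, hw, mul_zero, add_zero, zero_add,
        zero_mul, map_zero] at h
      exact h
end

section
/- For all integers n, m ≥ 2, one has (⌊n/m⌋ − 1)·(2^{n−1} − 1) ≤ Σ_{l=1}^{n} C(n,l)·⌊(n−l)/m⌋ ≤ ⌊n/m⌋·(2^{n−1} − 1). -/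
/-- **Lemma 6.2 (Lange–Schreieder)**.  For all integers `n, m ≥ 2`,
`(⌊n/m⌋ − 1)·(2^{n−1} − 1) ≤ Σ_{l=1}^{n} C(n,l)·⌊(n−l)/m⌋ ≤ ⌊n/m⌋·(2^{n−1} − 1)`. -/
theorem lange_schreieder_bound (n m : ℕ) (hn : 2 ≤ n) (hm : 2 ≤ m) :
    ((n / m : ℕ) - 1 : ℤ) * (2 ^ (n - 1) - 1) ≤
      ∑ l ∈ Finset.Icc 1 n, (n.choose l : ℤ) * ((n - l) / m : ℕ) ∧
    ∑ l ∈ Finset.Icc 1 n, (n.choose l : ℤ) * ((n - l) / m : ℕ) ≤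
      ((n / m : ℕ) : ℤ) * (2 ^ (n - 1) - 1) := by
  set q : ℕ := n / m with hq
  set S : ℤ := ∑ l ∈ Finset.Icc 1 n, (n.choose l : ℤ) * ((n - l) / m : ℕ) with hS
  have hm0 : 0 < m := by omega
  -- key div bounds
  have key : ∀ l, l ≤ n → ((n - l) / m + l / m ≤ q ∧ q ≤ (n - l) / m + l / m + 1) := by
    intro l hl
    have h := Nat.add_div (a := n - l) (b := l) hm0
    rw [Nat.sub_add_cancel hl] at h
    rw [hq]
    split_ifs at h <;> omega
  have hsplit : Finset.range (n + 1) = insert 0 (Finset.Icc 1 n) := by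
    ext x
    simp only [Finset.mem_range, Finset.mem_insert, Finset.mem_Icc]
    omega
  have hT : ∑ l ∈ Finset.range (n + 1), (n.choose l : ℤ) * ((n - l) / m : ℕ)
      = S + (q : ℤ) := by
    rw [hsplit, Finset.sum_insert (by simp)]
    simp [hS, hq]
    ring
  have hrefl : ∑ l ∈ Finset.range (n + 1), (n.choose l : ℤ) * ((n - l) / m : ℕ)
      = ∑ l ∈ Finset.range (n + 1), (n.choose l : ℤ) * ((l / m : ℕ) : ℤ) := by
    rw [← Finset.sum_range_reflect (fun l => (n.choose l : ℤ) * ((l / m : ℕ) : ℤ)) (n + 1)]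
    apply Finset.sum_congr rfl
    intro l hl
    have hl' : l ≤ n := by
      have := Finset.mem_range.mp hl; omega
    simp only [Nat.add_sub_cancel]
    rw [Nat.choose_symm hl']
  have h2T : 2 * (S + (q : ℤ)) =
      ∑ l ∈ Finset.range (n + 1),
        (n.choose l : ℤ) * ((((n - l) / m : ℕ) : ℤ) + ((l / m : ℕ) : ℤ)) := by
    have := hT
    calc 2 * (S + (q : ℤ))
        = (∑ l ∈ Finset.range (n + 1), (n.choose l : ℤ) * ((n - l) / m : ℕ))
          + ∑ l ∈ Finset.range (n + 1), (n.choose l : ℤ) * ((l / m : ℕ) : ℤ) := by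
            rw [← hrefl, hT]; ring
      _ = _ := by
            rw [← Finset.sum_add_distrib]
            apply Finset.sum_congr rfl
            intro l _
            ring
  have hchoose : ((2 : ℤ) ^ n) = ∑ l ∈ Finset.range (n + 1), (n.choose l : ℤ) := by
    have h := Nat.sum_range_choose n
    have h2 := congrArg (fun x : ℕ => (x : ℤ)) h
    push_cast at h2
    exact h2.symm
  -- upper bound on 2T
  have hupper : 2 * (S + (q : ℤ)) ≤ (q : ℤ) * 2 ^ n := by
    rw [h2T, hchoose, Finset.mul_sum]
    apply Finset.sum_le_sum
    intro l hl
    have hl' : l ≤ n := by have := Finset.mem_range.mp hl; omega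
    have hk := (key l hl').1
    have hb : (((n - l) / m : ℕ) : ℤ) + ((l / m : ℕ) : ℤ) ≤ (q : ℤ) := by exact_mod_cast hk
    have hc : (0 : ℤ) ≤ (n.choose l : ℤ) := by positivity
    nlinarith
  -- lower bound on 2T
  have hlower : ((q : ℤ) - 1) * 2 ^ n + 2 ≤ 2 * (S + (q : ℤ)) := by
    rw [h2T]
    have hsum : ∑ l ∈ Finset.range (n + 1),
        (((q : ℤ) - 1) * (n.choose l : ℤ) + (if l = 0 then 1 else 0)
          + (if l = n then 1 else 0)) = ((q : ℤ) - 1) * 2 ^ n + 2 := by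
      rw [Finset.sum_add_distrib, Finset.sum_add_distrib, ← Finset.mul_sum, ← hchoose]
      have h0 : ∑ l ∈ Finset.range (n + 1), (if l = 0 then (1 : ℤ) else 0) = 1 := by
        rw [Finset.sum_ite_eq' (Finset.range (n + 1)) 0 (fun _ => (1 : ℤ))]
        simp
      have h1 : ∑ l ∈ Finset.range (n + 1), (if l = n then (1 : ℤ) else 0) = 1 := by
        rw [Finset.sum_ite_eq' (Finset.range (n + 1)) n (fun _ => (1 : ℤ))]
        simp
      rw [h0, h1]; ring
    rw [← hsum]
    apply Finset.sum_le_sum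
    intro l hl
    have hl' : l ≤ n := by have := Finset.mem_range.mp hl; omega
    by_cases h0 : l = 0
    · subst h0
      rw [if_pos rfl, if_neg (show ¬ (0 = n) by omega)]
      simp only [Nat.choose_zero_right, Nat.cast_one, Nat.sub_zero, Nat.zero_div,
        Nat.cast_zero, one_mul, add_zero, ← hq]
      linarith
    · by_cases h1 : l = n
      · subst h1
        rw [if_neg h0, if_pos rfl]
        simp only [Nat.choose_self, Nat.cast_one, Nat.sub_self, Nat.zero_div,
          Nat.cast_zero, one_mul, zero_add, ← hq]
        linarith
      · rw [if_neg h0, if_neg h1]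
        have hk := (key l hl').2
        have hb : (q : ℤ) - 1 ≤ (((n - l) / m : ℕ) : ℤ) + ((l / m : ℕ) : ℤ) := by
          have : (q : ℤ) ≤ (((n - l) / m : ℕ) : ℤ) + ((l / m : ℕ) : ℤ) + 1 := by
            exact_mod_cast hk
          linarith
        have hc : (0 : ℤ) ≤ (n.choose l : ℤ) := by positivity
        nlinarith
  have hp : (2 : ℤ) ^ n = 2 * 2 ^ (n - 1) := by
    rw [← pow_succ']
    congr 1
    omega
  rw [hp] at hlower hupper
  constructor
  · linarith
  · linarith
end

section
/- For every positive integer n: (i) Σ_{l=1}^{n} C(n,l)·⌊(n−l)/2⌋ = (n−1)·2^{n−2} − ⌊n/2⌋; and (ii) Σ_{l=1}^{n} C(n,l)·⌊(n−l)/3⌋ = ((n−2)/3)·2^{n−1} − n/3 + δ, where δ depends only on n mod 6 and equals 1/3, 2/3, 2/3, −1/3, 0, 2/3 for n ≡ 0, 1, 2, 3, 4, 5 (mod 6) respectively. -/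
open Finset

/-- The constant `δ`, depending on the residue of `n` modulo `6`. -/
def deltaOf (n : ℕ) : ℚ :=
  if n % 6 = 0 then 1/3
  else if n % 6 = 1 then 2/3
  else if n % 6 = 2 then 2/3
  else if n % 6 = 3 then -1/3
  else if n % 6 = 4 then 0
  else 2/3

/-!
Let `binomDivSum d n = ∑_{k=0}^{n} C(n,k) ⌊k/d⌋`. By the symmetry `C(n,l) = C(n,n-l)` the sums in
question are `binomDivSum d n - ⌊n/d⌋`. Pascal's rule turns `∑ C(n+1,k) g(k)` into
`∑ C(n,k) (g(k) + g(k+1))`. For `d = 2` the identity `⌊k/2⌋ + ⌊(k+1)/2⌋ = k` then gives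
`binomDivSum 2 (n+1) = ∑ k C(n,k) = n 2^{n-1}` directly. For `d = 3`, Pascal's rule applied three
times together with Hermite's identity `⌊k/3⌋ + ⌊(k+1)/3⌋ + ⌊(k+2)/3⌋ = k` gives
`binomDivSum 3 (n+3) + binomDivSum 3 n = 3n 2^{n-1} + 2^n`, so the closed form follows by induction
in steps of three; its bounded part changes sign under `n ↦ n+3`, which is the origin of `δ`.
-/

theorem sum_range_choose_succ_mul (g : ℕ → ℕ) (n : ℕ) :
    ∑ k ∈ range (n + 2), (n + 1).choose k * g k =
      ∑ k ∈ range (n + 1), n.choose k * (g k + g (k + 1)) := by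
  simpa only [Nat.cast_id, mul_add, sum_add_distrib] using sum_choose_succ_mul (fun i _ => g i) n

theorem sum_range_choose_add_three_mul (g : ℕ → ℕ) (n : ℕ) :
    ∑ k ∈ range (n + 4), (n + 3).choose k * g k =
      ∑ k ∈ range (n + 1), n.choose k * (g k + 3 * g (k + 1) + 3 * g (k + 2) + g (k + 3)) := by
  rw [sum_range_choose_succ_mul, sum_range_choose_succ_mul, sum_range_choose_succ_mul]
  congr! 2
  ring

def binomDivSum (d n : ℕ) : ℕ := ∑ k ∈ range (n + 1), n.choose k * (k / d)

theorem sum_Icc_choose_mul_sub_div_add (d n : ℕ) :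
    ∑ l ∈ Icc 1 n, n.choose l * ((n - l) / d) + n / d = binomDivSum d n := by
  have hrange : range (n + 1) = insert 0 (Icc 1 n) := by
    ext x
    simp only [mem_range, mem_insert, mem_Icc]
    omega
  have hreflect : ∑ l ∈ range (n + 1), n.choose l * ((n - l) / d) = binomDivSum d n := by
    rw [binomDivSum, ← sum_range_reflect]
    refine sum_congr rfl fun l hl => ?_
    have hln := mem_range_succ_iff.mp hl
    rw [add_tsub_cancel_right, Nat.choose_symm hln, Nat.sub_sub_self hln]
  rw [← hreflect, hrange, sum_insert (by simp), add_comm]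
  simp

theorem binomDivSum_two_succ (n : ℕ) : binomDivSum 2 (n + 1) = n * 2 ^ (n - 1) := by
  have hfloor : ∀ k, k / 2 + (k + 1) / 2 = k := by omega
  simp only [binomDivSum, sum_range_choose_succ_mul, hfloor, mul_comm (n.choose _)]
  exact Nat.sum_range_mul_choose n

theorem binomDivSum_three_add_three (n : ℕ) :
    binomDivSum 3 (n + 3) + binomDivSum 3 n = 3 * (n * 2 ^ (n - 1)) + 2 ^ n := by
  have hfloor : ∀ k, k / 3 + 3 * ((k + 1) / 3) + 3 * ((k + 2) / 3) + (k + 3) / 3 + k / 3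
      = 3 * k + 1 := by omega
  calc binomDivSum 3 (n + 3) + binomDivSum 3 n
      = ∑ k ∈ range (n + 1), n.choose k * (3 * k + 1) := by
        rw [binomDivSum, binomDivSum, sum_range_choose_add_three_mul, ← sum_add_distrib]
        simp only [← mul_add, hfloor]
    _ = 3 * (n * 2 ^ (n - 1)) + 2 ^ n := by
        simp only [mul_add, mul_one, sum_add_distrib, Nat.sum_range_choose,
          ← Nat.sum_range_mul_choose, mul_sum]
        congr! 2
        ring

theorem deltaOf_add_three_add_self (n : ℕ) : deltaOf (n + 3) + deltaOf n = 2 * (n % 3 : ℕ) / 3 := by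
  have h6 : (n + 3) % 6 = (n % 6 + 3) % 6 := by omega
  have h3 : n % 3 = n % 6 % 3 := by omega
  have : n % 6 < 6 := Nat.mod_lt _ (by norm_num)
  rw [deltaOf, deltaOf, h6, h3]
  interval_cases n % 6 <;> norm_num

theorem binomDivSum_three_eq (n : ℕ) (hn : 1 ≤ n) :
    (binomDivSum 3 n : ℚ) = ((n : ℚ) - 2) / 3 * 2 ^ (n - 1) + deltaOf n - (n % 3 : ℕ) / 3 := by
  induction n using Nat.strong_induction_on with
  | _ n ih =>
  rcases le_or_gt n 3 with hle | hgt
  · interval_cases n <;> norm_num [binomDivSum, sum_range_succ, deltaOf]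
  obtain ⟨m, rfl⟩ : ∃ m, n = m + 3 := ⟨n - 3, by omega⟩
  have hm : 1 ≤ m := by omega
  have hrec : (binomDivSum 3 (m + 3) : ℚ) + binomDivSum 3 m = 3 * (m * 2 ^ (m - 1)) + 2 ^ m := by
    exact_mod_cast binomDivSum_three_add_three m
  have hpow : (2 : ℚ) ^ m = 2 * 2 ^ (m - 1) := by
    rw [← pow_succ', Nat.sub_add_cancel hm]
  rw [show m + 3 - 1 = (m - 1) + 3 by omega, Nat.add_mod_right]
  push_cast
  linear_combination hrec - ih m (by omega) hm - deltaOf_add_three_add_self m + hpow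

/-- **Lemma 6.3 (Lange–Schreieder)**.  For every positive integer `n`:
(i) `Σ_{l=1}^{n} C(n,l)·⌊(n−l)/2⌋ = (n−1)·2^{n−2} − ⌊n/2⌋`, and
(ii) `Σ_{l=1}^{n} C(n,l)·⌊(n−l)/3⌋ = ((n−2)/3)·2^{n−1} − n/3 + δ`,
where `δ` depends only on `n mod 6` and equals `1/3, 2/3, 2/3, −1/3, 0, 2/3` for
`n ≡ 0, 1, 2, 3, 4, 5 (mod 6)` respectively. -/
theorem lange_schreieder_explicit_sums (n : ℕ) (hn : 1 ≤ n) :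
    (∑ l ∈ Icc 1 n, (n.choose l : ℤ) * ((n - l) / 2 : ℕ) =
      ((n : ℤ) - 1) * 2 ^ (n - 2) - ((n / 2 : ℕ) : ℤ)) ∧
    (∑ l ∈ Icc 1 n, (n.choose l : ℚ) * ((n - l) / 3 : ℕ) =
      ((n : ℚ) - 2) / 3 * 2 ^ (n - 1) - (n : ℚ) / 3 + deltaOf n) := by
  constructor
  · have h : (∑ l ∈ Icc 1 n, (n.choose l : ℤ) * ((n - l) / 2 : ℕ)) + ((n / 2 : ℕ) : ℤ) =
        binomDivSum 2 n := by
      exact_mod_cast sum_Icc_choose_mul_sub_div_add 2 n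
    obtain ⟨m, rfl⟩ : ∃ m, n = m + 1 := ⟨n - 1, by omega⟩
    rw [binomDivSum_two_succ] at h
    rw [show m + 1 - 2 = m - 1 by omega]
    push_cast at h ⊢
    linarith
  · have h : (∑ l ∈ Icc 1 n, (n.choose l : ℚ) * ((n - l) / 3 : ℕ)) + ((n / 3 : ℕ) : ℚ) =
        binomDivSum 3 n := by
      exact_mod_cast sum_Icc_choose_mul_sub_div_add 3 n
    have hdiv : ((n / 3 : ℕ) : ℚ) * 3 + (n % 3 : ℕ) = n := by exact_mod_cast Nat.div_add_mod' n 3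
    rw [binomDivSum_three_eq n hn] at h
    linear_combination h - hdiv / 3
end
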